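/- arXiv:2303.14832 — 2 statements merged into one kernel-verified Lean document; each statement's English description precedes it below -/
import Mathlib

section
/- Hardy–Leray inequality: for 1 < p < n and every f ∈ C_c^∞(ℝⁿ), ‖f(x)/|x|‖_{L^p(ℝⁿ)} ≤ C(n,p) · ‖∇f‖_{L^p(ℝⁿ)}. -/
open MeasureTheory Metric Set ENNReal Filter
noncomputable section

lemma lint_scale {n : ℕ} (h : EuclideanSpace ℝ (Fin n) → ℝ≥0∞) (hm : Measurable h)
    {t : ℝ} (ht : 0 < t) :
    ∫⁻ x, h (t • x) = ENNReal.ofReal (t ^ (-(n:ℝ))) * ∫⁻ x, h x := by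
  rw [← lintegral_map hm (measurable_const_smul t),
    Measure.map_addHaar_smul volume ht.ne', lintegral_smul_measure]
  congr 2
  rw [finrank_euclideanSpace, Fintype.card_fin,
    abs_of_nonneg (by positivity), Real.rpow_neg ht.le, Real.rpow_natCast]


lemma ball_fin {n : ℕ} {p R : ℝ} (hp : 0 < p) (hpn : p < n) (hR : 0 < R) :
    ∫⁻ x : EuclideanSpace ℝ (Fin n) in ball (0 : EuclideanSpace ℝ (Fin n)) R,
      ENNReal.ofReal (‖x‖ ^ (-p)) < ⊤ := by
  set μ' := (volume : Measure (EuclideanSpace ℝ (Fin n))).restrict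
    (ball (0 : EuclideanSpace ℝ (Fin n)) R) with hμ'
  have h_meas : Measurable fun x : EuclideanSpace ℝ (Fin n) => ‖x‖ ^ (-p) := by fun_prop
  have h_pos : ∀ x : EuclideanSpace ℝ (Fin n), 0 ≤ ‖x‖ ^ (-p) :=
    fun x => Real.rpow_nonneg (norm_nonneg x) _
  rw [show (∫⁻ x : EuclideanSpace ℝ (Fin n) in ball (0 : EuclideanSpace ℝ (Fin n)) R,
        ENNReal.ofReal (‖x‖ ^ (-p)))
      = ∫⁻ x : EuclideanSpace ℝ (Fin n), ENNReal.ofReal (‖x‖ ^ (-p)) ∂μ' from rfl,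
    lintegral_eq_lintegral_meas_le μ' (.of_forall h_pos) h_meas.aemeasurable]
  set V := (volume : Measure (EuclideanSpace ℝ (Fin n))) (ball (0 : EuclideanSpace ℝ (Fin n)) 1)
    with hV
  have hVfin : V < ⊤ := measure_ball_lt_top
  have hsub : ∀ t : ℝ, 0 < t →
      {x : EuclideanSpace ℝ (Fin n) | t ≤ ‖x‖ ^ (-p)} ⊆ closedBall 0 (t ^ (-p⁻¹)) := by
    intro t ht x hx
    simp only [mem_setOf_eq] at hx
    rcases eq_or_ne x 0 with rfl | hx0
    · rw [norm_zero, Real.zero_rpow (by simpa using hp.ne')] at hx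
      exact absurd (ht.trans_le hx) (lt_irrefl 0)
    · have hxn : 0 < ‖x‖ := norm_pos_iff.2 hx0
      have h2 := Real.rpow_le_rpow_of_nonpos ht hx (neg_nonpos.2 (inv_nonneg.2 hp.le))
      rw [mem_closedBall_zero_iff]
      calc ‖x‖ = (‖x‖ ^ (-p)) ^ (-p⁻¹) := by
            rw [← Real.rpow_mul (norm_nonneg x), neg_mul_neg, mul_inv_cancel₀ hp.ne',
              Real.rpow_one]
        _ ≤ t ^ (-p⁻¹) := h2
  have hbound : ∀ t : ℝ, t ∈ Ioi (0:ℝ) →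
      μ' {x : EuclideanSpace ℝ (Fin n) | t ≤ ‖x‖ ^ (-p)} ≤
      min ((volume : Measure (EuclideanSpace ℝ (Fin n))) (ball (0 : EuclideanSpace ℝ (Fin n)) R))
        (ENNReal.ofReal ((t ^ (-p⁻¹)) ^ n) * V) := by
    intro t ht
    refine le_min ?_ ?_
    · exact (measure_mono (subset_univ _)).trans (by rw [hμ', Measure.restrict_apply_univ])
    · refine le_trans (le_trans (Measure.restrict_le_self _) (measure_mono (hsub t ht))) ?_
      rw [Measure.addHaar_closedBall _ _ (Real.rpow_nonneg (le_of_lt ht) _), hV,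
        finrank_euclideanSpace, Fintype.card_fin]
  -- now split the integral
  set T := R ^ (-p) with hT
  have hT0 : 0 < T := Real.rpow_pos_of_pos hR _
  calc ∫⁻ t in Ioi 0, μ' {x : EuclideanSpace ℝ (Fin n) | t ≤ ‖x‖ ^ (-p)}
      ≤ ∫⁻ t in Ioi 0, min ((volume : Measure (EuclideanSpace ℝ (Fin n)))
          (ball (0 : EuclideanSpace ℝ (Fin n)) R)) (ENNReal.ofReal ((t ^ (-p⁻¹)) ^ n) * V) :=
        setLIntegral_mono_ae (by fun_prop) (Filter.Eventually.of_forall hbound)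
    _ ≤ (∫⁻ t in Ioc 0 T, min ((volume : Measure (EuclideanSpace ℝ (Fin n)))
          (ball (0 : EuclideanSpace ℝ (Fin n)) R)) (ENNReal.ofReal ((t ^ (-p⁻¹)) ^ n) * V))
        + ∫⁻ t in Ioi T, min ((volume : Measure (EuclideanSpace ℝ (Fin n)))
          (ball (0 : EuclideanSpace ℝ (Fin n)) R)) (ENNReal.ofReal ((t ^ (-p⁻¹)) ^ n) * V) := by
        rw [← lintegral_union measurableSet_Ioi (Ioc_disjoint_Ioi le_rfl)]
        exact lintegral_mono_set (by
          intro t ht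
          rcases le_or_gt t T with h | h
          · exact Or.inl ⟨ht, h⟩
          · exact Or.inr h)
    _ < ⊤ := by
        refine ENNReal.add_lt_top.2 ⟨?_, ?_⟩
        · calc ∫⁻ t in Ioc 0 T, min _ (ENNReal.ofReal ((t ^ (-p⁻¹)) ^ n) * V)
              ≤ ∫⁻ _ in Ioc 0 T, (volume : Measure (EuclideanSpace ℝ (Fin n)))
                  (ball (0 : EuclideanSpace ℝ (Fin n)) R) :=
                setLIntegral_mono_ae (by fun_prop) (.of_forall fun t _ => min_le_left _ _)
            _ = (volume : Measure (EuclideanSpace ℝ (Fin n)))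
                  (ball (0 : EuclideanSpace ℝ (Fin n)) R) * volume (Ioc (0:ℝ) T) :=
                setLIntegral_const _ _
            _ < ⊤ := ENNReal.mul_lt_top measure_ball_lt_top (by simp [Real.volume_Ioc])
        · have hexp : (-p⁻¹ * n) < -1 := by
            rw [neg_mul, neg_lt_neg_iff]
            calc (1:ℝ) = p⁻¹ * p := (inv_mul_cancel₀ hp.ne').symm
              _ < p⁻¹ * n := mul_lt_mul_of_pos_left hpn (inv_pos.2 hp)
          have hint := (integrableOn_Ioi_rpow_of_lt hexp hT0).hasFiniteIntegral
          rw [HasFiniteIntegral] at hint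
          calc ∫⁻ t in Ioi T, min _ (ENNReal.ofReal ((t ^ (-p⁻¹)) ^ n) * V)
              ≤ ∫⁻ t in Ioi T, ENNReal.ofReal ((t ^ (-p⁻¹)) ^ n) * V :=
                setLIntegral_mono_ae (by fun_prop) (.of_forall fun t _ => min_le_right _ _)
            _ = ∫⁻ t in Ioi T, ENNReal.ofReal (t ^ (-p⁻¹ * (n:ℝ))) * V := by
                refine setLIntegral_congr_fun measurableSet_Ioi (fun t ht => ?_)
                rw [← Real.rpow_natCast (t ^ (-p⁻¹)) n, ← Real.rpow_mul (le_of_lt (hT0.trans ht))]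
            _ ≤ (∫⁻ t in Ioi T, (‖t ^ (-p⁻¹ * (n:ℝ))‖₊ : ℝ≥0∞)) * V := by
                rw [← lintegral_mul_const' V _ hVfin.ne]
                exact setLIntegral_mono_ae (by fun_prop)
                  (.of_forall fun t _ => mul_le_mul_left (Real.ofReal_le_enorm _) V)
            _ < ⊤ := ENNReal.mul_lt_top hint hVfin


lemma pointwise_est {n : ℕ} {f : EuclideanSpace ℝ (Fin n) → ℝ} (hf : ContDiff ℝ (⊤ : ℕ∞) f)
    {R : ℝ} (hR : 0 < R) (hfR : ∀ y : EuclideanSpace ℝ (Fin n), R ≤ ‖y‖ → f y = 0)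
    {x : EuclideanSpace ℝ (Fin n)} (hx : x ≠ 0) :
    ENNReal.ofReal (|f x| / ‖x‖) ≤
      ∫⁻ t in Ioi (1:ℝ), ENNReal.ofReal (‖fderiv ℝ f (t • x)‖) := by
  have hxn : 0 < ‖x‖ := norm_pos_iff.2 hx
  set T : ℝ := R / ‖x‖ + 1 with hTdef
  have hT1 : 1 ≤ T := by
    have h : 0 < R / ‖x‖ := div_pos hR hxn
    rw [hTdef]; linarith
  have hderiv : ∀ t : ℝ, HasDerivAt (fun s : ℝ => f (s • x)) (fderiv ℝ f (t • x) x) t := by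
    intro t
    have h1 : HasFDerivAt f (fderiv ℝ f (t • x)) (t • x) :=
      ((hf.differentiable (by simp)) (t • x)).hasFDerivAt
    have h2 : HasDerivAt (fun s : ℝ => s • x) x t := by
      simpa using (hasDerivAt_id t).smul_const x
    exact h1.comp_hasDerivAt t h2
  have hsm : Continuous fun t : ℝ => t • x := continuous_id.smul continuous_const
  have hcont : Continuous fun t : ℝ => fderiv ℝ f (t • x) x := by
    exact ((hf.continuous_fderiv (by simp)).comp hsm).clm_apply continuous_const
  have hftc : f (T • x) - f ((1:ℝ) • x) = ∫ t in (1:ℝ)..T, fderiv ℝ f (t • x) x := by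
    exact (intervalIntegral.integral_eq_sub_of_hasDerivAt (fun t _ => hderiv t)
      (hcont.intervalIntegrable 1 T)).symm
  have hfT : f (T • x) = 0 := by
    apply hfR
    rw [norm_smul, Real.norm_eq_abs, abs_of_pos (lt_of_lt_of_le one_pos hT1)]
    rw [hTdef]
    rw [add_mul, div_mul_cancel₀ _ hxn.ne', one_mul]
    linarith
  have hgb : ∀ t : ℝ, |fderiv ℝ f (t • x) x| ≤ ‖fderiv ℝ f (t • x)‖ * ‖x‖ := by
    intro t
    calc |fderiv ℝ f (t • x) x| = ‖fderiv ℝ f (t • x) x‖ := (Real.norm_eq_abs _).symm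
      _ ≤ ‖fderiv ℝ f (t • x)‖ * ‖x‖ := ContinuousLinearMap.le_opNorm _ _
  have hgcont : Continuous fun t : ℝ => ‖fderiv ℝ f (t • x)‖ := by
    exact ((hf.continuous_fderiv (by simp)).comp hsm).norm
  have key : |f x| ≤ ‖x‖ * ∫ t in Set.Ioc (1:ℝ) T, ‖fderiv ℝ f (t • x)‖ := by
    have h1 : f x = -∫ t in (1:ℝ)..T, fderiv ℝ f (t • x) x := by
      rw [← hftc, hfT]; simp
    calc |f x| = |∫ t in (1:ℝ)..T, fderiv ℝ f (t • x) x| := by rw [h1, abs_neg]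
      _ ≤ ∫ t in (1:ℝ)..T, |fderiv ℝ f (t • x) x| := by
          simpa [Real.norm_eq_abs] using
            intervalIntegral.norm_integral_le_integral_norm (f := fun t => fderiv ℝ f (t • x) x) hT1
      _ ≤ ∫ t in (1:ℝ)..T, ‖fderiv ℝ f (t • x)‖ * ‖x‖ := by
          apply intervalIntegral.integral_mono_on hT1
          · exact (hcont.abs.intervalIntegrable 1 T)
          · exact ((hgcont.mul continuous_const).intervalIntegrable 1 T)
          · exact fun t _ => hgb t
      _ = ‖x‖ * ∫ t in Set.Ioc (1:ℝ) T, ‖fderiv ℝ f (t • x)‖ := by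
          rw [intervalIntegral.integral_of_le hT1, integral_mul_const, mul_comm]
  have hdiv : |f x| / ‖x‖ ≤ ∫ t in Set.Ioc (1:ℝ) T, ‖fderiv ℝ f (t • x)‖ := by
    rw [div_le_iff₀ hxn, mul_comm]
    exact key
  calc ENNReal.ofReal (|f x| / ‖x‖)
      ≤ ENNReal.ofReal (∫ t in Set.Ioc (1:ℝ) T, ‖fderiv ℝ f (t • x)‖) :=
        ENNReal.ofReal_le_ofReal hdiv
    _ = ∫⁻ t in Set.Ioc (1:ℝ) T, ENNReal.ofReal (‖fderiv ℝ f (t • x)‖) := by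
        rw [ofReal_integral_eq_lintegral_ofReal (hgcont.integrableOn_Ioc)
          (Filter.Eventually.of_forall fun t => norm_nonneg _)]
    _ ≤ ∫⁻ t in Ioi (1:ℝ), ENNReal.ofReal (‖fderiv ℝ f (t • x)‖) :=
        lintegral_mono_set Ioc_subset_Ioi_self



lemma phi_fin {n : ℕ} {p R M : ℝ} (hp : 1 < p) (hpn : p < n) (hR : 0 < R) (hM : 0 ≤ M)
    {g : EuclideanSpace ℝ (Fin n) → ℝ} (hgnn : ∀ x, 0 ≤ g x)
    (hgM : ∀ x, g x ≤ M) (hgR : ∀ x : EuclideanSpace ℝ (Fin n), R ≤ ‖x‖ → g x = 0) :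
    ∫⁻ x : EuclideanSpace ℝ (Fin n),
      (∫⁻ t in Ioi (1:ℝ), ENNReal.ofReal (g (t • x))) ^ p < ⊤ := by
  have hp0 : (0:ℝ) < p := lt_trans zero_lt_one hp
  have hn : 0 < n := by
    have : (0:ℝ) < n := lt_trans hp0 hpn
    exact_mod_cast this
  haveI : Nontrivial (EuclideanSpace ℝ (Fin n)) := by
    have h1 : (EuclideanSpace.single (⟨0, hn⟩ : Fin n) (1:ℝ)) ⟨0, hn⟩ = 1 := by
      simp [EuclideanSpace.single_apply]
    exact ⟨⟨EuclideanSpace.single ⟨0, hn⟩ 1, 0,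
      fun h => by rw [h] at h1; simpa using h1⟩⟩
  set φ : EuclideanSpace ℝ (Fin n) → ℝ≥0∞ :=
    fun x => ∫⁻ t in Ioi (1:ℝ), ENNReal.ofReal (g (t • x)) with hφ
  have hφ0 : ∀ x : EuclideanSpace ℝ (Fin n), R ≤ ‖x‖ → φ x = 0 := by
    intro x hxR
    have hzero : ∀ t ∈ Ioi (1:ℝ), ENNReal.ofReal (g (t • x)) = 0 := by
      intro t ht
      rw [mem_Ioi] at ht
      have h1t : (1:ℝ) ≤ t := le_of_lt ht
      have hle : R ≤ ‖t • x‖ := by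
        rw [norm_smul, Real.norm_eq_abs, abs_of_pos (lt_trans zero_lt_one ht)]
        calc R ≤ ‖x‖ := hxR
          _ = 1 * ‖x‖ := (one_mul _).symm
          _ ≤ t * ‖x‖ := mul_le_mul_of_nonneg_right h1t (norm_nonneg x)
      rw [hgR _ hle, ENNReal.ofReal_zero]
    show (∫⁻ t in Ioi (1:ℝ), ENNReal.ofReal (g (t • x))) = 0
    rw [setLIntegral_congr_fun measurableSet_Ioi hzero,
      lintegral_zero]
  have hφb : ∀ x : EuclideanSpace ℝ (Fin n), x ≠ 0 →
      φ x ≤ ENNReal.ofReal (M * R * ‖x‖⁻¹) := by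
    intro x hx
    have hxn : 0 < ‖x‖ := norm_pos_iff.2 hx
    calc φ x ≤ ∫⁻ t in Ioi (1:ℝ),
          (Ioc (1:ℝ) (R / ‖x‖)).indicator (fun _ => ENNReal.ofReal M) t := by
          refine setLIntegral_mono_ae
            ((measurable_const.indicator measurableSet_Ioc).aemeasurable)
            (Filter.Eventually.of_forall ?_)
          intro t ht
          rw [mem_Ioi] at ht
          rcases le_or_gt t (R / ‖x‖) with h | h
          · rw [indicator_of_mem (mem_Ioc.2 ⟨ht, h⟩)]
            exact ENNReal.ofReal_le_ofReal (hgM _)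
          · rw [indicator_of_notMem (fun hmem => absurd hmem.2 (not_le.2 h))]
            rw [hgR (t • x) ?_, ENNReal.ofReal_zero]
            rw [norm_smul, Real.norm_eq_abs, abs_of_pos (lt_trans zero_lt_one ht)]
            rw [div_lt_iff₀ hxn] at h
            exact le_of_lt h
      _ ≤ ∫⁻ t, (Ioc (1:ℝ) (R / ‖x‖)).indicator (fun _ => ENNReal.ofReal M) t :=
          setLIntegral_le_lintegral _ _
      _ = ENNReal.ofReal M * volume (Ioc (1:ℝ) (R / ‖x‖)) := by
          rw [lintegral_indicator_const measurableSet_Ioc]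
      _ ≤ ENNReal.ofReal M * ENNReal.ofReal (R * ‖x‖⁻¹) := by
          rw [Real.volume_Ioc]
          refine mul_le_mul_right (ENNReal.ofReal_le_ofReal ?_) _
          rw [div_eq_mul_inv]
          linarith [mul_pos hR (inv_pos.2 hxn)]
      _ = ENNReal.ofReal (M * R * ‖x‖⁻¹) := by
          rw [← ENNReal.ofReal_mul hM, mul_assoc]
  have hae : ∀ᵐ x : EuclideanSpace ℝ (Fin n), x ≠ 0 := by
    rw [ae_iff]
    simpa using measure_singleton (0 : EuclideanSpace ℝ (Fin n))
  have hmain : ∫⁻ x : EuclideanSpace ℝ (Fin n), φ x ^ p ≤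
      ∫⁻ x : EuclideanSpace ℝ (Fin n),
        (ball (0 : EuclideanSpace ℝ (Fin n)) R).indicator
          (fun x => ENNReal.ofReal ((M * R) ^ p) * ENNReal.ofReal (‖x‖ ^ (-p))) x := by
    refine lintegral_mono_ae ?_
    filter_upwards [hae] with x hx
    rcases lt_or_ge ‖x‖ R with h | h
    · rw [indicator_of_mem (mem_ball_zero_iff.2 h)]
      have hxn : 0 < ‖x‖ := norm_pos_iff.2 hx
      calc φ x ^ p ≤ ENNReal.ofReal (M * R * ‖x‖⁻¹) ^ p :=
            ENNReal.rpow_le_rpow (hφb x hx) hp0.le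
        _ = ENNReal.ofReal ((M * R * ‖x‖⁻¹) ^ p) :=
            ENNReal.ofReal_rpow_of_nonneg (by positivity) hp0.le
        _ = ENNReal.ofReal ((M * R) ^ p) * ENNReal.ofReal (‖x‖ ^ (-p)) := by
            rw [Real.mul_rpow (by positivity) (by positivity),
              Real.inv_rpow (norm_nonneg x), ← Real.rpow_neg (norm_nonneg x),
              ENNReal.ofReal_mul (by positivity)]
    · rw [hφ0 x h, ENNReal.zero_rpow_of_pos hp0]
      exact zero_le
  refine lt_of_le_of_lt hmain ?_
  rw [lintegral_indicator measurableSet_ball,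
    lintegral_const_mul' _ _ ENNReal.ofReal_ne_top]
  exact ENNReal.mul_lt_top ENNReal.ofReal_lt_top (ball_fin hp0 hpn hR)


theorem hardy_leray_inequality (n : ℕ) (p : ℝ) (hp : 1 < p) (hpn : p < n) :
    ∃ C : ℝ, 0 < C ∧
      ∀ f : EuclideanSpace ℝ (Fin n) → ℝ, ContDiff ℝ (⊤ : ℕ∞) f → HasCompactSupport f →
        (∫ x, (|f x| / ‖x‖) ^ p) ^ (1 / p) ≤
          C * (∫ x, ‖fderiv ℝ f x‖ ^ p) ^ (1 / p) := by
  have hp0 : (0:ℝ) < p := lt_trans zero_lt_one hp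
  have hnp : (0:ℝ) < (n:ℝ) - p := sub_pos.2 hpn
  refine ⟨p / ((n:ℝ) - p), div_pos hp0 hnp, fun f hf hsupp => ?_⟩
  have hn : 0 < n := by
    have h : (0:ℝ) < n := lt_trans hp0 hpn
    exact_mod_cast h
  haveI : Nontrivial (EuclideanSpace ℝ (Fin n)) := by
    have h1 : (EuclideanSpace.single (⟨0, hn⟩ : Fin n) (1:ℝ)) ⟨0, hn⟩ = 1 := by
      simp [EuclideanSpace.single_apply]
    exact ⟨⟨EuclideanSpace.single ⟨0, hn⟩ 1, 0, fun h => by rw [h] at h1; simp at h1⟩⟩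
  set g : EuclideanSpace ℝ (Fin n) → ℝ := fun x => ‖fderiv ℝ f x‖ with hgdef
  have hgc : Continuous g := (hf.continuous_fderiv (by simp)).norm
  have hgnn : ∀ x, 0 ≤ g x := fun x => norm_nonneg _
  obtain ⟨M, hgM⟩ := (hsupp.fderiv (𝕜 := ℝ)).exists_bound_of_continuous (hf.continuous_fderiv (by simp))
  have hM0 : 0 ≤ M := le_trans (norm_nonneg _) (hgM 0)
  obtain ⟨R, hR0, hRs⟩ := (IsCompact.isBounded hsupp).subset_ball_lt 0 0
  have hfR : ∀ y : EuclideanSpace ℝ (Fin n), R ≤ ‖y‖ → f y = 0 := by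
    intro y hy
    apply image_eq_zero_of_notMem_tsupport
    intro hmem
    have h := hRs hmem
    rw [mem_ball_zero_iff] at h
    linarith
  have hgR : ∀ y : EuclideanSpace ℝ (Fin n), R ≤ ‖y‖ → g y = 0 := by
    intro y hy
    have hy' : y ∉ tsupport f := by
      intro hmem
      have h := hRs hmem; rw [mem_ball_zero_iff] at h; linarith
    have hz : fderiv ℝ f y = 0 := by
      by_contra hne
      exact hy' (support_fderiv_subset ℝ (Function.mem_support.2 hne))
    rw [hgdef]; simp [hz]
  set φ : EuclideanSpace ℝ (Fin n) → ℝ≥0∞ :=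
    fun x => ∫⁻ t in Ioi (1:ℝ), ENNReal.ofReal (g (t • x)) with hφdef
  set A : ℝ≥0∞ := ∫⁻ x : EuclideanSpace ℝ (Fin n), ENNReal.ofReal (g x ^ p) with hAdef
  set I : ℝ≥0∞ := ∫⁻ x : EuclideanSpace ℝ (Fin n), φ x ^ p with hIdef
  -- finiteness of A
  have hA_fin : A < ⊤ := by
    have hb : ∀ x : EuclideanSpace ℝ (Fin n), ENNReal.ofReal (g x ^ p) ≤
        (ball (0 : EuclideanSpace ℝ (Fin n)) R).indicator
          (fun _ => ENNReal.ofReal (M ^ p)) x := by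
      intro x
      rcases lt_or_ge ‖x‖ R with h | h
      · rw [indicator_of_mem (mem_ball_zero_iff.2 h)]
        exact ENNReal.ofReal_le_ofReal (Real.rpow_le_rpow (hgnn x) (hgM x) hp0.le)
      · rw [indicator_of_notMem (fun hmem => absurd (mem_ball_zero_iff.1 hmem) (not_lt.2 h))]
        rw [hgR x h, Real.zero_rpow hp0.ne', ENNReal.ofReal_zero]
    calc A ≤ ∫⁻ x : EuclideanSpace ℝ (Fin n),
          (ball (0 : EuclideanSpace ℝ (Fin n)) R).indicator
            (fun _ => ENNReal.ofReal (M ^ p)) x := lintegral_mono hb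
      _ = ENNReal.ofReal (M ^ p) * volume (ball (0 : EuclideanSpace ℝ (Fin n)) R) :=
          lintegral_indicator_const measurableSet_ball _
      _ < ⊤ := ENNReal.mul_lt_top ENNReal.ofReal_lt_top measure_ball_lt_top
  have hIfin : I < ⊤ := phi_fin hp hpn hR0 hM0 hgnn hgM hgR
  -- measurability
  have hgmx : Measurable fun z : EuclideanSpace ℝ (Fin n) × ℝ =>
      ENNReal.ofReal (g (z.2 • z.1)) :=
    ((hgc.comp (continuous_snd.smul continuous_fst)).measurable).ennreal_ofReal
  have hφm : Measurable φ :=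
    Measurable.lintegral_prod_right (f := fun x t => ENNReal.ofReal (g (t • x))) hgmx
  have hφmp : Measurable fun x => φ x ^ (p - 1) :=
    ENNReal.continuous_rpow_const.measurable.comp hφm
  have hgtm : ∀ t : ℝ, Measurable fun x : EuclideanSpace ℝ (Fin n) =>
      ENNReal.ofReal (g (t • x)) := fun t =>
    ((hgc.comp (continuous_const_smul t)).measurable).ennreal_ofReal
  set q : ℝ := p / (p - 1) with hqdef
  have hpq : p.HolderConjugate q := Real.HolderConjugate.conjExponent hp
  -- scaling
  have hgpmeas : Measurable fun y : EuclideanSpace ℝ (Fin n) => ENNReal.ofReal (g y ^ p) :=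
    ((hgc.rpow_const (fun x => Or.inr hp0.le)).measurable).ennreal_ofReal
  have hscale : ∀ t : ℝ, t ∈ Ioi (1:ℝ) →
      (∫⁻ x : EuclideanSpace ℝ (Fin n), ENNReal.ofReal (g (t • x)) ^ p)
        = ENNReal.ofReal (t ^ (-(n:ℝ))) * A := by
    intro t ht
    rw [mem_Ioi] at ht
    have ht0 : (0:ℝ) < t := lt_trans zero_lt_one ht
    calc ∫⁻ x : EuclideanSpace ℝ (Fin n), ENNReal.ofReal (g (t • x)) ^ p
        = ∫⁻ x : EuclideanSpace ℝ (Fin n), ENNReal.ofReal (g (t • x) ^ p) :=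
          lintegral_congr fun x => ENNReal.ofReal_rpow_of_nonneg (hgnn _) hp0.le
      _ = ENNReal.ofReal (t ^ (-(n:ℝ))) * A :=
          lint_scale (fun y => ENNReal.ofReal (g y ^ p)) hgpmeas ht0
  -- Hoelder per t
  have hholder : ∀ t : ℝ, t ∈ Ioi (1:ℝ) →
      (∫⁻ x : EuclideanSpace ℝ (Fin n), φ x ^ (p-1) * ENNReal.ofReal (g (t • x)))
        ≤ (I ^ (1/q) * A ^ (1/p)) * ENNReal.ofReal (t ^ (-(n:ℝ) * p⁻¹)) := by
    intro t ht
    have ht0 : (0:ℝ) < t := lt_trans zero_lt_one (mem_Ioi.1 ht)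
    have h1 : (∫⁻ x : EuclideanSpace ℝ (Fin n), φ x ^ (p-1) * ENNReal.ofReal (g (t • x)))
        ≤ (∫⁻ x : EuclideanSpace ℝ (Fin n), (φ x ^ (p-1)) ^ q) ^ (1/q)
          * (∫⁻ x : EuclideanSpace ℝ (Fin n), ENNReal.ofReal (g (t • x)) ^ p) ^ (1/p) := by
      simpa using ENNReal.lintegral_mul_le_Lp_mul_Lq volume hpq.symm
        hφmp.aemeasurable (hgtm t).aemeasurable
    have h2 : (∫⁻ x : EuclideanSpace ℝ (Fin n), (φ x ^ (p-1)) ^ q) = I := by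
      rw [hIdef]
      apply lintegral_congr
      intro x
      rw [← ENNReal.rpow_mul, hpq.sub_one_mul_conj]
    rw [h2, hscale t ht] at h1
    refine le_trans h1 (le_of_eq ?_)
    rw [ENNReal.mul_rpow_of_nonneg _ _ (by positivity : (0:ℝ) ≤ 1/p),
      ENNReal.ofReal_rpow_of_nonneg (Real.rpow_nonneg ht0.le _) (by positivity : (0:ℝ) ≤ 1/p),
      ← Real.rpow_mul ht0.le]
    rw [show -(n:ℝ) * (1/p) = -(n:ℝ) * p⁻¹ by rw [one_div]]
    ring
  -- the exponent integral
  have he : -(n:ℝ) * p⁻¹ < -1 := by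
    rw [neg_mul, neg_lt_neg_iff]
    calc (1:ℝ) = p * p⁻¹ := (mul_inv_cancel₀ hp0.ne').symm
      _ < n * p⁻¹ := mul_lt_mul_of_pos_right hpn (inv_pos.2 hp0)
  have hK : (∫⁻ t in Ioi (1:ℝ), ENNReal.ofReal (t ^ (-(n:ℝ) * p⁻¹)))
      = ENNReal.ofReal (p / ((n:ℝ) - p)) := by
    rw [← ofReal_integral_eq_lintegral_ofReal (integrableOn_Ioi_rpow_of_lt he zero_lt_one)
      (by filter_upwards [ae_restrict_mem measurableSet_Ioi] with t ht
          exact Real.rpow_nonneg (le_of_lt (lt_trans zero_lt_one (mem_Ioi.1 ht))) _)]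
    rw [integral_Ioi_rpow_of_lt he zero_lt_one]
    congr 1
    rw [Real.one_rpow]
    have h1 : -(n:ℝ) * p⁻¹ + 1 ≠ 0 := by
      intro h
      have h2 : -(n:ℝ) * p⁻¹ = -1 := by linarith
      rw [h2] at he; exact lt_irrefl _ he
    rw [div_eq_div_iff h1 hnp.ne']
    field_simp
    ring
  -- main chain
  have hIval : I = ∫⁻ t in Ioi (1:ℝ),
      ∫⁻ x : EuclideanSpace ℝ (Fin n), φ x ^ (p-1) * ENNReal.ofReal (g (t • x)) := by
    calc I = ∫⁻ x : EuclideanSpace ℝ (Fin n), φ x ^ (p-1) * φ x := by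
          rw [hIdef]
          apply lintegral_congr
          intro x
          have h := ENNReal.rpow_add_of_nonneg (x := φ x) (p-1) 1
            (by linarith : (0:ℝ) ≤ p - 1) zero_le_one
          rw [sub_add_cancel, ENNReal.rpow_one] at h
          exact h
      _ = ∫⁻ x : EuclideanSpace ℝ (Fin n),
            ∫⁻ t in Ioi (1:ℝ), φ x ^ (p-1) * ENNReal.ofReal (g (t • x)) := by
          apply lintegral_congr
          intro x
          exact (lintegral_const_mul _ ((hgc.comp
            ((continuous_id (X := ℝ)).smul continuous_const)).measurable.ennreal_ofReal)).symm
      _ = ∫⁻ t in Ioi (1:ℝ),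
            ∫⁻ x : EuclideanSpace ℝ (Fin n), φ x ^ (p-1) * ENNReal.ofReal (g (t • x)) := by
          apply lintegral_lintegral_swap
          exact ((hφmp.comp measurable_fst).mul hgmx).aemeasurable
  have hchain : I ≤ (I ^ (1/q) * A ^ (1/p)) * ENNReal.ofReal (p / ((n:ℝ) - p)) := by
    calc I = ∫⁻ t in Ioi (1:ℝ),
          ∫⁻ x : EuclideanSpace ℝ (Fin n), φ x ^ (p-1) * ENNReal.ofReal (g (t • x)) := hIval
      _ ≤ ∫⁻ t in Ioi (1:ℝ),
            (I ^ (1/q) * A ^ (1/p)) * ENNReal.ofReal (t ^ (-(n:ℝ) * p⁻¹)) :=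
          setLIntegral_mono_ae ((measurable_const.mul (by fun_prop)).aemeasurable)
            (Filter.Eventually.of_forall hholder)
      _ = (I ^ (1/q) * A ^ (1/p))
            * ∫⁻ t in Ioi (1:ℝ), ENNReal.ofReal (t ^ (-(n:ℝ) * p⁻¹)) := by
          rw [lintegral_const_mul' _ _ (ENNReal.mul_ne_top
            (ENNReal.rpow_ne_top_of_nonneg hpq.symm.one_div_nonneg hIfin.ne)
            (ENNReal.rpow_ne_top_of_nonneg hpq.one_div_nonneg hA_fin.ne))]
      _ = (I ^ (1/q) * A ^ (1/p)) * ENNReal.ofReal (p / ((n:ℝ) - p)) := by rw [hK]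
  -- divide
  set c : ℝ≥0∞ := ENNReal.ofReal (p / ((n:ℝ) - p)) with hcdef
  have hI_le : I ≤ A * c ^ p := by
    rcases eq_or_ne I 0 with hI0 | hI0
    · rw [hI0]; exact zero_le
    · have hqp : 1/q + 1/p = 1 := by
        rw [one_div, one_div]
        exact hpq.symm.inv_add_inv_eq_one
      have hsplit : I = I ^ (1/q) * I ^ (1/p) := by
        rw [← ENNReal.rpow_add _ _ hI0 hIfin.ne, hqp, ENNReal.rpow_one]
      have hcancel : I ^ (1/p) ≤ A ^ (1/p) * c := by
        have h : I ^ (1/q) * I ^ (1/p) ≤ I ^ (1/q) * (A ^ (1/p) * c) := by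
          calc I ^ (1/q) * I ^ (1/p) = I := hsplit.symm
            _ ≤ (I ^ (1/q) * A ^ (1/p)) * c := hchain
            _ = I ^ (1/q) * (A ^ (1/p) * c) := mul_assoc _ _ _
        exact (ENNReal.mul_le_mul_iff_right
          (ENNReal.rpow_pos (pos_iff_ne_zero.2 hI0) hIfin.ne).ne'
          (ENNReal.rpow_ne_top_of_nonneg hpq.symm.one_div_nonneg hIfin.ne)).1 h
      calc I = (I ^ (1/p)) ^ p := by
            rw [← ENNReal.rpow_mul, one_div, inv_mul_cancel₀ hp0.ne', ENNReal.rpow_one]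
        _ ≤ (A ^ (1/p) * c) ^ p := ENNReal.rpow_le_rpow hcancel hp0.le
        _ = A * c ^ p := by
            rw [ENNReal.mul_rpow_of_nonneg _ _ hp0.le, ← ENNReal.rpow_mul,
              one_div, inv_mul_cancel₀ hp0.ne', ENNReal.rpow_one]
  -- compare LHS with I
  have hae : ∀ᵐ x : EuclideanSpace ℝ (Fin n), x ≠ 0 := by
    rw [ae_iff]
    simpa using measure_singleton (0 : EuclideanSpace ℝ (Fin n))
  have hLle : (∫⁻ x : EuclideanSpace ℝ (Fin n), ENNReal.ofReal ((|f x| / ‖x‖) ^ p)) ≤ I := by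
    rw [hIdef]
    refine lintegral_mono_ae ?_
    filter_upwards [hae] with x hx
    calc ENNReal.ofReal ((|f x| / ‖x‖) ^ p)
        = ENNReal.ofReal (|f x| / ‖x‖) ^ p :=
          (ENNReal.ofReal_rpow_of_nonneg (div_nonneg (abs_nonneg _) (norm_nonneg _)) hp0.le).symm
      _ ≤ φ x ^ p := ENNReal.rpow_le_rpow (pointwise_est hf hR0 hfR hx) hp0.le
  -- convert to real integrals
  have hfm : Measurable f := hf.continuous.measurable
  have hLHS : (∫ x : EuclideanSpace ℝ (Fin n), (|f x| / ‖x‖) ^ p)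
      = (∫⁻ x : EuclideanSpace ℝ (Fin n), ENNReal.ofReal ((|f x| / ‖x‖) ^ p)).toReal := by
    rw [integral_eq_lintegral_of_nonneg_ae
      (Filter.Eventually.of_forall fun x =>
        Real.rpow_nonneg (div_nonneg (abs_nonneg _) (norm_nonneg _)) _)
      (Measurable.aestronglyMeasurable (by fun_prop))]
  have hRHS : (∫ x : EuclideanSpace ℝ (Fin n), ‖fderiv ℝ f x‖ ^ p) = A.toReal := by
    rw [hAdef]
    rw [integral_eq_lintegral_of_nonneg_ae
      (Filter.Eventually.of_forall fun x => Real.rpow_nonneg (norm_nonneg _) _)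
      (Measurable.aestronglyMeasurable (by fun_prop))]
  have hRHSnn : 0 ≤ ∫ x : EuclideanSpace ℝ (Fin n), ‖fderiv ℝ f x‖ ^ p := by
    rw [hRHS]; exact ENNReal.toReal_nonneg
  have hfinal : (∫ x : EuclideanSpace ℝ (Fin n), (|f x| / ‖x‖) ^ p)
      ≤ (p / ((n:ℝ) - p)) ^ p * ∫ x : EuclideanSpace ℝ (Fin n), ‖fderiv ℝ f x‖ ^ p := by
    rw [hLHS, hRHS]
    have hb : (∫⁻ x : EuclideanSpace ℝ (Fin n), ENNReal.ofReal ((|f x| / ‖x‖) ^ p))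
        ≤ A * c ^ p := le_trans hLle hI_le
    have hne : A * c ^ p ≠ ⊤ := ENNReal.mul_ne_top hA_fin.ne
      (ENNReal.rpow_ne_top_of_nonneg hp0.le ENNReal.ofReal_ne_top)
    calc (∫⁻ x : EuclideanSpace ℝ (Fin n), ENNReal.ofReal ((|f x| / ‖x‖) ^ p)).toReal
        ≤ (A * c ^ p).toReal := ENNReal.toReal_mono hne hb
      _ = (p / ((n:ℝ) - p)) ^ p * A.toReal := by
          rw [ENNReal.toReal_mul, ← ENNReal.toReal_rpow, hcdef,
            ENNReal.toReal_ofReal (le_of_lt (div_pos hp0 hnp))]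
          ring
  -- take p-th roots
  have hLnn : 0 ≤ ∫ x : EuclideanSpace ℝ (Fin n), (|f x| / ‖x‖) ^ p := by
    rw [hLHS]; exact ENNReal.toReal_nonneg
  calc (∫ x : EuclideanSpace ℝ (Fin n), (|f x| / ‖x‖) ^ p) ^ (1/p)
      ≤ ((p / ((n:ℝ) - p)) ^ p * ∫ x : EuclideanSpace ℝ (Fin n), ‖fderiv ℝ f x‖ ^ p) ^ (1/p) :=
        Real.rpow_le_rpow hLnn hfinal (by positivity)
    _ = p / ((n:ℝ) - p) * (∫ x : EuclideanSpace ℝ (Fin n), ‖fderiv ℝ f x‖ ^ p) ^ (1/p) := by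
        rw [Real.mul_rpow (by positivity) hRHSnn]
        rw [← Real.rpow_mul (le_of_lt (div_pos hp0 hnp)), mul_one_div,
          div_self hp0.ne', Real.rpow_one]
end
end

section
/- Stein–Weiss power-weight condition: let 0 < α < n, 1 < p ≤ q < ∞, and real numbers a, b with −n/q < a ≤ b < n/p' (where 1/p + 1/p' = 1) satisfying 1/p − 1/q = α/n + (a−b)/n. Then sup over all cubes Q ⊂ ℝⁿ of |Q|^{α/n + 1/q − 1/p} · ((1/|Q|)∫_Q |x|^{aq} dx)^{1/q} · ((1/|Q|)∫_Q |x|^{−bp'} dx)^{1/p'} is finite. -/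
/-!
Let `ρ = √n ℓ` be the diameter of the cube `Q` with center `c` and side `ℓ`, and
`M = max (‖c‖, ρ)`. For every `s > -n` the average of `‖x‖ ^ s` over `Q` is `≲ M ^ s`:
if `‖c‖ > ρ` then `‖x‖` is comparable to `‖c‖` on `Q`; otherwise `Q` lies in the ball of
radius `2ρ` about the origin, over which `‖x‖ ^ s` integrates to `(2ρ) ^ (n + s)` times the
(finite, as `s > -n`) integral over the unit ball. With `s = a q` and `s = -b p'` the testing
quantity is then `≲ ℓ ^ (b - a) M ^ (a - b) ≤ 1`, since the balance condition makes the
exponent of `|Q|` equal to `(b - a) / n` and `a ≤ b`.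
-/

open MeasureTheory Metric Set

lemma Real.rpow_le_two_rpow_abs_mul_rpow {x y : ℝ} (hy : 0 < y) (hyx : y / 2 ≤ x)
    (hxy : x ≤ 2 * y) (s : ℝ) : x ^ s ≤ 2 ^ |s| * y ^ s := by
  rcases le_or_gt 0 s with hs | hs
  · calc x ^ s ≤ (2 * y) ^ s := Real.rpow_le_rpow (by linarith) hxy hs
      _ = 2 ^ |s| * y ^ s := by rw [abs_of_nonneg hs, Real.mul_rpow zero_le_two hy.le]
  · calc x ^ s ≤ (y / 2) ^ s := Real.rpow_le_rpow_of_nonpos (by positivity) hyx hs.le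
      _ = 2 ^ |s| * y ^ s := by
        rw [abs_of_neg hs, Real.div_rpow hy.le zero_le_two, Real.rpow_neg zero_le_two]
        ring

lemma setAverage_le_of_forall_norm_le {X : Type*} [MeasurableSpace X] {μ : Measure X}
    {f : X → ℝ} {S : Set X} {C : ℝ} (hS : μ S < ⊤) (hC : 0 ≤ C) (hf : ∀ x ∈ S, ‖f x‖ ≤ C) :
    ⨍ x in S, f x ∂μ ≤ C := by
  rw [setAverage_eq, smul_eq_mul]
  rcases eq_or_ne (μ.real S) 0 with h0 | h0
  · simpa [h0] using hC
  calc (μ.real S)⁻¹ * ∫ x in S, f x ∂μ ≤ (μ.real S)⁻¹ * (C * μ.real S) :=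
        mul_le_mul_of_nonneg_left
          ((le_abs_self _).trans (norm_setIntegral_le_of_norm_le_const hS hf)) (by positivity)
    _ = C := by field_simp

section NormedSpace

variable {E : Type*} [NormedAddCommGroup E] [MeasurableSpace E]

lemma setAverage_rpow_norm_nonneg (μ : Measure E) (S : Set E) (s : ℝ) :
    0 ≤ ⨍ x in S, ‖x‖ ^ s ∂μ := by
  rw [setAverage_eq, smul_eq_mul]
  exact mul_nonneg (by positivity) (integral_nonneg fun x => by positivity)

lemma setAverage_rpow_norm_le_of_subset_closedBall {μ : Measure E} {S : Set E} (hS : μ S < ⊤)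
    {c : E} (hc : c ≠ 0) (hSc : S ⊆ closedBall c (‖c‖ / 2)) (s : ℝ) :
    ⨍ x in S, ‖x‖ ^ s ∂μ ≤ 2 ^ |s| * ‖c‖ ^ s := by
  have hc₀ : 0 < ‖c‖ := norm_pos_iff.mpr hc
  refine setAverage_le_of_forall_norm_le hS (by positivity) fun x hx => ?_
  have hxc : ‖x - c‖ ≤ ‖c‖ / 2 := mem_closedBall_iff_norm.mp (hSc hx)
  rw [Real.norm_of_nonneg (by positivity)]
  refine Real.rpow_le_two_rpow_abs_mul_rpow hc₀ ?_ ?_ s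
  · linarith [norm_sub_norm_le c x, norm_sub_rev c x]
  · linarith [norm_le_insert' x c]

variable [NormedSpace ℝ E] [FiniteDimensional ℝ E] [BorelSpace E]
  (μ : Measure E) [μ.IsAddHaarMeasure]

lemma setIntegral_ball_rpow_norm {R : ℝ} (hR : 0 < R) (s : ℝ) :
    ∫ x in ball (0 : E) R, ‖x‖ ^ s ∂μ
      = R ^ (Module.finrank ℝ E + s) * ∫ x in ball (0 : E) 1, ‖x‖ ^ s ∂μ := by
  have h := Measure.setIntegral_comp_smul_of_pos μ (fun x : E => ‖x‖ ^ s) (ball 0 1) hR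
  rw [smul_unitBall_of_pos hR] at h
  have hscale : ∀ x : E, ‖R • x‖ ^ s = R ^ s * ‖x‖ ^ s := fun x => by
    rw [norm_smul, Real.norm_of_nonneg hR.le, Real.mul_rpow hR.le (norm_nonneg x)]
  simp only [hscale, integral_const_mul, smul_eq_mul] at h
  rw [Real.rpow_add hR, Real.rpow_natCast, mul_assoc, h]
  field_simp

lemma setIntegral_rpow_norm_le_of_subset_ball (hE : 1 ≤ Module.finrank ℝ E) {s : ℝ}
    (hs : -(Module.finrank ℝ E : ℝ) < s) {S : Set E} {R : ℝ} (hR : 0 < R)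
    (hSR : S ⊆ ball 0 R) :
    ∫ x in S, ‖x‖ ^ s ∂μ
      ≤ R ^ (Module.finrank ℝ E + s) * ∫ x in ball (0 : E) 1, ‖x‖ ^ s ∂μ := by
  rw [← setIntegral_ball_rpow_norm μ hR]
  refine setIntegral_mono_set ?_ (ae_of_all _ fun x => by positivity) (ae_of_all _ hSR)
  refine integrableOn_ball_of_norm_le_rpow (C := 1) (α := -s) hE (by linarith)
    (ae_of_all _ fun x => ?_) (measurable_norm.pow_const s).aestronglyMeasurable
  rw [neg_neg, one_mul, Real.norm_of_nonneg (by positivity)]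

end NormedSpace

section Cube

variable {n : ℕ}

def cube (c : EuclideanSpace ℝ (Fin n)) (ℓ : ℝ) : Set (EuclideanSpace ℝ (Fin n)) :=
  {x | ∀ i, |x i - c i| ≤ ℓ / 2}

lemma volume_cube (c : EuclideanSpace ℝ (Fin n)) {ℓ : ℝ} (hℓ : 0 ≤ ℓ) :
    volume (cube c ℓ) = ENNReal.ofReal (ℓ ^ n) := by
  have hpi : cube c ℓ = (MeasurableEquiv.toLp 2 (Fin n → ℝ)).symm ⁻¹'
      univ.pi fun i => Icc (c i - ℓ / 2) (c i + ℓ / 2) := by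
    ext x
    simp only [cube, mem_ofPred_eq, mem_preimage, mem_univ_pi, mem_Icc, abs_le,
      MeasurableEquiv.coe_toLp_symm]
    exact forall_congr' fun i => by
      constructor <;> rintro ⟨h₁, h₂⟩ <;> constructor <;> linarith
  rw [hpi, (EuclideanSpace.volume_preserving_symm_measurableEquiv_toLp (Fin n)).measure_preimage
    (MeasurableSet.univ_pi fun i => measurableSet_Icc).nullMeasurableSet, volume_pi_pi]
  simp [Real.volume_Icc, ENNReal.ofReal_pow hℓ]

lemma measureReal_cube (c : EuclideanSpace ℝ (Fin n)) {ℓ : ℝ} (hℓ : 0 ≤ ℓ) :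
    volume.real (cube c ℓ) = ℓ ^ n := by
  rw [measureReal_def, volume_cube c hℓ, ENNReal.toReal_ofReal (by positivity)]

lemma cube_subset_closedBall (c : EuclideanSpace ℝ (Fin n)) {ℓ : ℝ} (hℓ : 0 ≤ ℓ) :
    cube c ℓ ⊆ closedBall c (√n * ℓ / 2) := by
  intro x hx
  rw [mem_closedBall, EuclideanSpace.dist_eq]
  calc √(∑ i, dist (x i) (c i) ^ 2) ≤ √(∑ _i : Fin n, (ℓ / 2) ^ 2) := by
        gcongr with i
        exact (Real.dist_eq _ _).trans_le (hx i)
    _ = √n * ℓ / 2 := by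
        rw [Finset.sum_const, Finset.card_univ, Fintype.card_fin, nsmul_eq_mul,
          Real.sqrt_mul (Nat.cast_nonneg n), Real.sqrt_sq (by positivity), mul_div_assoc]

lemma setAverage_rpow_norm_cube_le (hn : 1 ≤ n) {s : ℝ} (hs : -(n : ℝ) < s) :
    ∃ K, 0 ≤ K ∧ ∀ (c : EuclideanSpace ℝ (Fin n)) (ℓ : ℝ), 0 < ℓ →
      ⨍ x in cube c ℓ, ‖x‖ ^ s ∂volume ≤ K * max ‖c‖ (√n * ℓ) ^ s := by
  set I := ∫ x in ball (0 : EuclideanSpace ℝ (Fin n)) 1, ‖x‖ ^ s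
  have hI : 0 ≤ I := integral_nonneg fun x => by positivity
  refine ⟨2 ^ |s| + 2 ^ (n + s) * √n ^ n * I, by positivity, fun c ℓ hℓ => ?_⟩
  set ρ := √n * ℓ
  have hρ : 0 < ρ := by positivity
  have hQ : cube c ℓ ⊆ closedBall c (ρ / 2) := cube_subset_closedBall c hℓ.le
  rcases le_or_gt ‖c‖ ρ with hnear | hfar
  · have hsub : cube c ℓ ⊆ ball 0 (2 * ρ) := fun x hx => by
      rw [mem_ball_zero_iff]
      linarith [norm_le_insert' x c, mem_closedBall_iff_norm.mp (hQ hx)]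
    have hint := setIntegral_rpow_norm_le_of_subset_ball volume (by simpa) (by simpa)
      (by positivity) hsub
    rw [finrank_euclideanSpace_fin] at hint
    calc ⨍ x in cube c ℓ, ‖x‖ ^ s ∂volume
          = (ℓ ^ n)⁻¹ * ∫ x in cube c ℓ, ‖x‖ ^ s := by
          rw [setAverage_eq, measureReal_cube c hℓ.le, smul_eq_mul]
      _ ≤ (ℓ ^ n)⁻¹ * ((2 * ρ) ^ (n + s) * I) := by gcongr
      _ = 2 ^ (n + s) * √n ^ n * I * ρ ^ s := by
          rw [Real.mul_rpow zero_le_two hρ.le, Real.rpow_add hρ, Real.rpow_natCast, mul_pow]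
          field_simp
      _ ≤ _ := by
          rw [max_eq_right hnear]
          gcongr
          exact le_add_of_nonneg_left (by positivity)
  · have hc : c ≠ 0 := norm_pos_iff.mp (hρ.trans hfar)
    have hQc : cube c ℓ ⊆ closedBall c (‖c‖ / 2) :=
      hQ.trans (closedBall_subset_closedBall (by linarith))
    have hQ_fin : volume (cube c ℓ) < ⊤ := by simp [volume_cube c hℓ.le]
    refine (setAverage_rpow_norm_le_of_subset_closedBall hQ_fin hc hQc s).trans ?_
    rw [max_eq_left hfar.le]
    exact mul_le_mul_of_nonneg_right (le_add_of_nonneg_right (mul_nonneg (by positivity) hI))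
      (Real.rpow_nonneg (norm_nonneg c) s)

lemma rpow_setAverage_rpow_norm_cube_le (hn : 1 ≤ n) {s t : ℝ} (ht : 0 < t)
    (hst : -(n : ℝ) < s * t) :
    ∃ K, 0 ≤ K ∧ ∀ (c : EuclideanSpace ℝ (Fin n)) (ℓ : ℝ), 0 < ℓ →
      (⨍ x in cube c ℓ, ‖x‖ ^ (s * t) ∂volume) ^ (1 / t)
        ≤ K * max ‖c‖ (√n * ℓ) ^ s := by
  obtain ⟨K, hK, hbound⟩ := setAverage_rpow_norm_cube_le hn hst
  refine ⟨K ^ (1 / t), by positivity, fun c ℓ hℓ => ?_⟩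
  have hM : 0 < max ‖c‖ (√n * ℓ) := lt_max_of_lt_right (by positivity)
  calc (⨍ x in cube c ℓ, ‖x‖ ^ (s * t) ∂volume) ^ (1 / t)
      ≤ (K * max ‖c‖ (√n * ℓ) ^ (s * t)) ^ (1 / t) :=
        Real.rpow_le_rpow (setAverage_rpow_norm_nonneg _ _ _) (hbound c ℓ hℓ) (by positivity)
    _ = K ^ (1 / t) * max ‖c‖ (√n * ℓ) ^ s := by
        rw [Real.mul_rpow hK (by positivity), ← Real.rpow_mul hM.le, mul_assoc,
          mul_one_div_cancel ht.ne', mul_one]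

end Cube

theorem stein_weiss_power_weight_condition_general
    (n : ℕ) (hn : 1 ≤ n) (α p q a b : ℝ)
    (hp : 1 < p) (hpq : p ≤ q)
    (ha : -(n : ℝ) / q < a) (hab : a ≤ b) (hb : b < (n : ℝ) / (p / (p - 1)))
    (hbal : 1 / p - 1 / q = α / n + (a - b) / n) :
    ∃ C : ℝ, ∀ (c : EuclideanSpace ℝ (Fin n)) (ℓ : ℝ), 0 < ℓ →
      (volume {x : EuclideanSpace ℝ (Fin n) | ∀ i, |x i - c i| ≤ ℓ / 2}).toReal ^
            (α / n + 1 / q - 1 / p) *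
          (⨍ x in {x : EuclideanSpace ℝ (Fin n) | ∀ i, |x i - c i| ≤ ℓ / 2},
              ‖x‖ ^ (a * q) ∂volume) ^ (1 / q) *
          (⨍ x in {x : EuclideanSpace ℝ (Fin n) | ∀ i, |x i - c i| ≤ ℓ / 2},
              ‖x‖ ^ (-b * (p / (p - 1))) ∂volume) ^ (1 / (p / (p - 1))) ≤ C := by
  have hq : 0 < q := by linarith
  have hp' : 0 < p / (p - 1) := div_pos (by linarith) (by linarith)
  obtain ⟨K₁, hK₁, h₁⟩ := rpow_setAverage_rpow_norm_cube_le hn hq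
    (s := a) (by rwa [div_lt_iff₀ hq] at ha)
  obtain ⟨K₂, hK₂, h₂⟩ := rpow_setAverage_rpow_norm_cube_le hn hp'
    (s := -b) (by rw [lt_div_iff₀ hp'] at hb; linarith)
  refine ⟨K₁ * K₂, fun c ℓ hℓ => ?_⟩
  have hexp : α / n + 1 / q - 1 / p = (b - a) / n := by linear_combination -hbal
  have hvol : volume.real (cube c ℓ) ^ ((b - a) / n) = ℓ ^ (b - a) := by
    rw [measureReal_cube c hℓ.le, ← Real.rpow_natCast, ← Real.rpow_mul hℓ.le,
      mul_div_cancel₀ _ (by positivity)]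
  set M := max ‖c‖ (√n * ℓ)
  have hM : 0 < M := lt_max_of_lt_right (by positivity)
  have hℓM : ℓ ≤ M := le_max_of_le_right (le_mul_of_one_le_left hℓ.le (by simpa using hn))
  change volume.real (cube c ℓ) ^ _ * (⨍ x in cube c ℓ, _ ∂volume) ^ _ *
    (⨍ x in cube c ℓ, _ ∂volume) ^ _ ≤ _
  rw [hexp, hvol]
  calc ℓ ^ (b - a) * (⨍ x in cube c ℓ, ‖x‖ ^ (a * q)) ^ (1 / q) *
        (⨍ x in cube c ℓ, ‖x‖ ^ (-b * (p / (p - 1)))) ^ (1 / (p / (p - 1)))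
      ≤ ℓ ^ (b - a) * (K₁ * M ^ a) * (K₂ * M ^ (-b)) := by
        gcongr
        · exact Real.rpow_nonneg (setAverage_rpow_norm_nonneg _ _ _) _
        · exact h₁ c ℓ hℓ
        · exact h₂ c ℓ hℓ
    _ = K₁ * K₂ * (ℓ / M) ^ (b - a) := by
        rw [Real.div_rpow hℓ.le hM.le, Real.rpow_sub hM, Real.rpow_neg hM.le]
        field_simp
    _ ≤ K₁ * K₂ := mul_le_of_le_one_right (by positivity)
        (Real.rpow_le_one (by positivity) ((div_le_one hM).mpr hℓM) (by linarith))

theorem stein_weiss_power_weight_condition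
    (n : ℕ) (hn : 1 ≤ n) (α p q a b : ℝ)
    (hα0 : 0 < α) (hαn : α < n)
    (hp : 1 < p) (hpq : p ≤ q)
    (ha : -(n : ℝ) / q < a) (hab : a ≤ b) (hb : b < (n : ℝ) / (p / (p - 1)))
    (hbal : 1 / p - 1 / q = α / n + (a - b) / n) :
    ∃ C : ℝ, ∀ (c : EuclideanSpace ℝ (Fin n)) (ℓ : ℝ), 0 < ℓ →
      (volume {x : EuclideanSpace ℝ (Fin n) | ∀ i, |x i - c i| ≤ ℓ / 2}).toReal ^
            (α / n + 1 / q - 1 / p) *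
          (⨍ x in {x : EuclideanSpace ℝ (Fin n) | ∀ i, |x i - c i| ≤ ℓ / 2},
              ‖x‖ ^ (a * q) ∂volume) ^ (1 / q) *
          (⨍ x in {x : EuclideanSpace ℝ (Fin n) | ∀ i, |x i - c i| ≤ ℓ / 2},
              ‖x‖ ^ (-b * (p / (p - 1))) ∂volume) ^ (1 / (p / (p - 1))) ≤ C :=
  stein_weiss_power_weight_condition_general n hn α p q a b hp hpq ha hab hb hbal
end
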